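/- Suppose B and g are continuous and τ-periodic, and the Floquet exponents of the system ẋ = B(t)x all have negative real part (λ := max real part < 0). Then the solution x of ẋ = B(t)x + g(t), x(t₀) = x₀, satisfies ‖x(t+τ) − x(t)‖ ≤ e^{λ(t−t₀)}·m·c·n·(t−t₀+τ)^{n−1}·(2‖x₀‖ + τ·max_{v∈[0,τ]}‖g(v)‖) for t−t₀ > 1, where m = max_{(t,t')∈[0,τ]²}‖X(t,t')‖ and c is the conditioning constant of the Jordan transformation. In particular ‖x(t+τ) − x(t)‖ → 0 exponentially as t → ∞. -/

import Mathlib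

open Matrix
open scoped Matrix.Norms.L2Operator

/-- The Euclidean (`ℓ²`) norm of a complex vector. -/
noncomputable def eunorm {n : ℕ} (v : Fin n → ℂ) : ℝ :=
  ‖(EuclideanSpace.equiv (Fin n) ℂ).symm v‖

/-- `J` is a matrix in Jordan normal form. -/
def IsJordanForm {k : ℕ} (J : Matrix (Fin k) (Fin k) ℂ) : Prop :=
  (∀ i j : Fin k, (j : ℕ) ≠ (i : ℕ) → (j : ℕ) ≠ (i : ℕ) + 1 → J i j = 0) ∧
  (∀ i j : Fin k, (j : ℕ) = (i : ℕ) + 1 → J i j = 0 ∨ (J i j = 1 ∧ J i i = J j j))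

/-!
By variation of constants, `x t = P t t₀ x₀ + ∫ v in t₀..t, P t v (g v)`. Periodicity of `B` gives
`P (t + τ) (v + τ) = P t v`, so after the substitution `v ↦ v - τ` the integrals in
`x (t + τ) - x t` cancel except over `[t₀ - τ, t₀]`. Every propagator `P b a` that remains has
`t - t₀ ≤ b - a ≤ t - t₀ + τ`, and for these the Floquet form gives
`‖P b a‖ ≤ m ‖W u‖ ‖(W u)⁻¹‖ ‖exp ((b - a) • J u)‖` with `u ∈ [0, τ)`. Splitting `J = D + N`
into its diagonal and its superdiagonal part, which commute, `‖exp (s • D)‖ ≤ e^{λ s}` because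
the diagonal entries of `J` are Floquet exponents, and `N` is nilpotent with `‖N‖ ≤ 1`, so
`‖exp (s • N)‖ ≤ n s^{n-1}` for `s ≥ 1`.
-/

open Set

theorem ODE_solution_unique_of_linear {E : Type*} [NormedAddCommGroup E] [NormedSpace ℝ E]
    {A : ℝ → E →L[ℝ] E} (hA : Continuous A) {f g : ℝ → E}
    (hf : ∀ t, HasDerivAt f (A t (f t)) t) (hg : ∀ t, HasDerivAt g (A t (g t)) t)
    {t₀ : ℝ} (h : f t₀ = g t₀) : f = g := by
  funext t
  set r := |t - t₀| + 1
  obtain ⟨C, hC⟩ := (isCompact_Icc (a := t₀ - r) (b := t₀ + r)).exists_bound_of_continuousOn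
    hA.continuousOn
  have hlip : ∀ s ∈ Ioo (t₀ - r) (t₀ + r), LipschitzOnWith C.toNNReal (A s) univ := fun s hs ↦
    ((A s).lipschitz.weaken ((hC s (Ioo_subset_Icc_self hs)).trans
      (Real.le_coe_toNNReal C))).lipschitzOnWith
  have hr : 0 < r := by positivity
  have ht : t ∈ Ioo (t₀ - r) (t₀ + r) := by
    constructor <;> linarith [neg_abs_le (t - t₀), le_abs_self (t - t₀)]
  exact ODE_solution_unique_of_mem_Ioo hlip ⟨by linarith, by linarith⟩
    (fun s _ ↦ ⟨hf s, mem_univ _⟩) (fun s _ ↦ ⟨hg s, mem_univ _⟩) h ht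

section Propagator

variable {𝔸 : Type*} [NormedRing 𝔸] [NormedAlgebra ℝ 𝔸]
  {B : ℝ → 𝔸} {P : ℝ → ℝ → 𝔸} (hB : Continuous B) (hP₀ : ∀ a, P a a = 1)
  (hP : ∀ t a, HasDerivAt (fun s ↦ P s a) (B t * P t a) t)
include hB hP₀ hP

theorem propagator_mul (s b a : ℝ) : P s b * P b a = P s a := by
  refine congrFun (ODE_solution_unique_of_linear (A := fun t ↦ ContinuousLinearMap.mul ℝ 𝔸 (B t))
    (f := fun s ↦ P s b * P b a) (g := fun s ↦ P s a)
    ((ContinuousLinearMap.mul ℝ 𝔸).continuous.comp hB) (fun t ↦ ?_) (fun t ↦ hP t a)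
    (t₀ := b) (by simp [hP₀])) s
  simpa [mul_assoc] using (hP t b).mul_const (P b a)

theorem propagator_add_period {τ : ℝ} (hBτ : ∀ t, B (t + τ) = B t) (s a : ℝ) :
    P (s + τ) (a + τ) = P s a := by
  refine congrFun (ODE_solution_unique_of_linear (A := fun t ↦ ContinuousLinearMap.mul ℝ 𝔸 (B t))
    (f := fun s ↦ P (s + τ) (a + τ)) (g := fun s ↦ P s a)
    ((ContinuousLinearMap.mul ℝ 𝔸).continuous.comp hB) (fun t ↦ ?_) (fun t ↦ hP t a)
    (t₀ := a) (by simp [hP₀])) s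
  simpa [hBτ] using (hP (t + τ) (a + τ)).comp_add_const t τ

theorem propagator_mul_swap (a b : ℝ) : P a b * P b a = 1 := by
  rw [propagator_mul hB hP₀ hP, hP₀]

theorem inverse_propagator (a b : ℝ) : Ring.inverse (P b a) = P a b :=
  Ring.inverse_unit ⟨P b a, P a b, propagator_mul_swap hB hP₀ hP b a,
    propagator_mul_swap hB hP₀ hP a b⟩

theorem hasDerivAt_propagator_snd [CompleteSpace 𝔸] (t s : ℝ) :
    HasDerivAt (fun r ↦ P t r) (-(P t s * B s)) s := by
  have hinv := (hasFDerivAt_ringInverse (𝕜 := ℝ) ⟨P s t, P t s, propagator_mul_swap hB hP₀ hP s t,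
    propagator_mul_swap hB hP₀ hP t s⟩).comp_hasDerivAt s (hP s t)
  rw [show (fun r ↦ P t r) = Ring.inverse ∘ fun r ↦ P r t from
    funext fun r ↦ (inverse_propagator hB hP₀ hP t r).symm]
  refine hinv.congr_deriv ?_
  simp [mul_assoc, propagator_mul_swap hB hP₀ hP s t]

theorem continuous_propagator_snd [CompleteSpace 𝔸] (t : ℝ) : Continuous fun r ↦ P t r :=
  continuous_iff_continuousAt.2 fun s ↦ (hasDerivAt_propagator_snd hB hP₀ hP t s).continuousAt

end Propagator

section VariationOfConstants

variable {E : Type*} [NormedAddCommGroup E] [NormedSpace ℝ E] [CompleteSpace E]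
  {A : ℝ → E →L[ℝ] E} {U : ℝ → ℝ → E →L[ℝ] E} (hA : Continuous A) (hU₀ : ∀ a, U a a = 1)
  (hU : ∀ t a, HasDerivAt (fun s ↦ U s a) (A t * U t a) t)
  {g : ℝ → E} (hg : Continuous g) {x : ℝ → E} (hx : ∀ t, HasDerivAt x (A t (x t) + g t) t)
include hA hU₀ hU hg hx

theorem eq_propagator_add_integral (t₀ t : ℝ) :
    x t = U t t₀ (x t₀) + ∫ v in t₀..t, U t v (g v) := by
  have hderiv (s : ℝ) : HasDerivAt (fun r ↦ U t r (x r)) (U t s (g s)) s := by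
    refine ((hasDerivAt_propagator_snd hA hU₀ hU t s).clm_apply (hx s)).congr_deriv ?_
    simp [map_add]
  have hcont : Continuous fun s ↦ U t s (g s) :=
    (continuous_propagator_snd hA hU₀ hU t).clm_apply hg
  rw [intervalIntegral.integral_eq_sub_of_hasDerivAt (fun s _ ↦ hderiv s)
    (hcont.intervalIntegrable _ _), hU₀]
  simp

theorem add_period_sub_eq_integral {τ : ℝ} (hAτ : ∀ t, A (t + τ) = A t) (hgτ : ∀ t, g (t + τ) = g t)
    (t₀ t : ℝ) :
    x (t + τ) - x t = U (t + τ) t₀ (x t₀) - U t t₀ (x t₀) + ∫ v in t₀ - τ..t₀, U t v (g v) := by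
  have hcont : Continuous fun v ↦ U t v (g v) :=
    (continuous_propagator_snd hA hU₀ hU t).clm_apply hg
  have hshift : ∫ v in t₀..t + τ, U (t + τ) v (g v) = ∫ v in t₀ - τ..t, U t v (g v) := by
    have h (v : ℝ) : U (t + τ) v (g v) = U t (v - τ) (g (v - τ)) := by
      rw [← propagator_add_period hA hU₀ hU hAτ t (v - τ), ← hgτ (v - τ), sub_add_cancel]
    simp only [h, intervalIntegral.integral_comp_sub_right fun v ↦ U t v (g v),
      add_sub_cancel_right]
  rw [eq_propagator_add_integral hA hU₀ hU hg hx t₀ (t + τ),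
    eq_propagator_add_integral hA hU₀ hU hg hx t₀ t, hshift,
    ← intervalIntegral.integral_add_adjacent_intervals
      (hcont.intervalIntegrable (t₀ - τ) t₀) (hcont.intervalIntegrable t₀ t)]
  abel

theorem norm_add_period_sub_le {τ : ℝ} (hτ : 0 ≤ τ) (hAτ : ∀ t, A (t + τ) = A t)
    (hgτ : ∀ t, g (t + τ) = g t) {t₀ t K G : ℝ}
    (hK : ∀ a b, t - t₀ ≤ b - a → b - a ≤ t - t₀ + τ → ‖U b a‖ ≤ K) (hG : ∀ v, ‖g v‖ ≤ G) :
    ‖x (t + τ) - x t‖ ≤ K * (2 * ‖x t₀‖ + τ * G) := by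
  have hK₀ : 0 ≤ K := (norm_nonneg _).trans (hK t₀ t le_rfl (by linarith))
  have hint : ‖∫ v in t₀ - τ..t₀, U t v (g v)‖ ≤ K * G * τ := by
    have h := intervalIntegral.norm_integral_le_of_norm_le_const (a := t₀ - τ) (b := t₀)
      (f := fun v ↦ U t v (g v)) (C := K * G) fun v hv ↦ by
        rw [uIoc_of_le (by linarith)] at hv
        exact ((U t v).le_opNorm _).trans (mul_le_mul
          (hK v t (by linarith [hv.2]) (by linarith [hv.1])) (hG v) (norm_nonneg _) hK₀)
    rwa [sub_sub_cancel, abs_of_nonneg hτ] at h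
  have hx₀ (b : ℝ) (hb : ‖U b t₀‖ ≤ K) : ‖U b t₀ (x t₀)‖ ≤ K * ‖x t₀‖ :=
    (U b t₀).le_of_opNorm_le hb _
  rw [add_period_sub_eq_integral hA hU₀ hU hg hx hAτ hgτ]
  calc _ ≤ ‖U (t + τ) t₀ (x t₀)‖ + ‖U t t₀ (x t₀)‖ + ‖∫ v in t₀ - τ..t₀, U t v (g v)‖ :=
        (norm_add_le _ _).trans (add_le_add_left (norm_sub_le _ _) _)
    _ ≤ K * ‖x t₀‖ + K * ‖x t₀‖ + K * G * τ := by
        gcongr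
        · exact hx₀ _ (hK t₀ (t + τ) (by linarith) (by linarith))
        · exact hx₀ _ (hK t₀ t le_rfl (by linarith))
    _ = K * (2 * ‖x t₀‖ + τ * G) := by ring

end VariationOfConstants

section EuclideanAction

variable {n : ℕ}

noncomputable def toRealEuclideanCLM : Matrix (Fin n) (Fin n) ℂ →L[ℝ]
    (EuclideanSpace ℂ (Fin n) →L[ℝ] EuclideanSpace ℂ (Fin n)) :=
  LinearMap.toContinuousLinearMap
    ((ContinuousLinearMap.restrictScalarsₗ ℂ _ _ ℝ ℝ).comp
      ((toEuclideanCLM (n := Fin n) (𝕜 := ℂ)).toAlgEquiv.toLinearMap.restrictScalars ℝ))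

theorem toRealEuclideanCLM_apply (M : Matrix (Fin n) (Fin n) ℂ) (v : Fin n → ℂ) :
    toRealEuclideanCLM M ((EuclideanSpace.equiv (Fin n) ℂ).symm v) =
      (EuclideanSpace.equiv (Fin n) ℂ).symm (M *ᵥ v) :=
  rfl

theorem toRealEuclideanCLM_mul (M N : Matrix (Fin n) (Fin n) ℂ) :
    toRealEuclideanCLM (M * N) = toRealEuclideanCLM M * toRealEuclideanCLM N := by
  ext v
  simp [toRealEuclideanCLM]

theorem toRealEuclideanCLM_one : toRealEuclideanCLM (1 : Matrix (Fin n) (Fin n) ℂ) = 1 := by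
  ext v
  simp [toRealEuclideanCLM]

theorem norm_toRealEuclideanCLM (M : Matrix (Fin n) (Fin n) ℂ) :
    ‖toRealEuclideanCLM M‖ = ‖M‖ :=
  ContinuousLinearMap.norm_restrictScalars _

theorem hasDerivAt_toRealEuclideanCLM {M : ℝ → Matrix (Fin n) (Fin n) ℂ}
    {M' : Matrix (Fin n) (Fin n) ℂ} {t : ℝ} (h : ∀ i j, HasDerivAt (fun s ↦ M s i j) (M' i j) t) :
    HasDerivAt (fun s ↦ toRealEuclideanCLM (M s)) (toRealEuclideanCLM M') t :=
  toRealEuclideanCLM.hasFDerivAt.comp_hasDerivAt t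
    (hasDerivAt_pi.2 fun i ↦ hasDerivAt_pi.2 fun j ↦ h i j)

theorem hasDerivAt_euclideanEquiv_symm {f : ℝ → Fin n → ℂ} {f' : Fin n → ℂ} {t : ℝ}
    (h : ∀ i, HasDerivAt (fun s ↦ f s i) (f' i) t) :
    HasDerivAt (fun s ↦ (EuclideanSpace.equiv (Fin n) ℂ).symm (f s))
      ((EuclideanSpace.equiv (Fin n) ℂ).symm f') t :=
  ((EuclideanSpace.equiv (Fin n) ℂ).symm.toContinuousLinearMap.restrictScalars ℝ).hasFDerivAt
    |>.comp_hasDerivAt t (hasDerivAt_pi.2 h)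

end EuclideanAction

theorem norm_exp_smul_le_of_pow_eq_zero {𝔸 : Type*} [NormedRing 𝔸] [NormOneClass 𝔸]
    [NormedAlgebra ℝ 𝔸] [Algebra ℚ 𝔸] {N : 𝔸} {n : ℕ} (hN : N ^ n = 0) (hN₁ : ‖N‖ ≤ 1)
    {s : ℝ} (hs : 1 ≤ s) :
    ‖NormedSpace.exp (s • N)‖ ≤ n * s ^ (n - 1) := by
  have hsum : NormedSpace.exp (s • N) =
      ∑ k ∈ Finset.range n, (k.factorial⁻¹ : ℝ) • (s • N) ^ k := by
    rw [NormedSpace.exp_eq_tsum ℝ]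
    refine tsum_eq_sum fun k hk ↦ ?_
    rw [smul_pow, pow_eq_zero_of_le (not_lt.1 (Finset.mem_range.not.1 hk)) hN, smul_zero, smul_zero]
  have hterm (k : ℕ) (hk : k ∈ Finset.range n) :
      ‖(k.factorial⁻¹ : ℝ) • (s • N) ^ k‖ ≤ s ^ (n - 1) := by
    have hfact : ‖(k.factorial⁻¹ : ℝ)‖ ≤ 1 := by
      rw [norm_inv, Real.norm_natCast]
      exact inv_le_one_of_one_le₀ (mod_cast k.factorial_pos)
    have hpow : ‖s ^ k‖ ≤ s ^ (n - 1) := by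
      rw [norm_pow, Real.norm_of_nonneg (by linarith)]
      exact pow_le_pow_right₀ hs (by simp at hk; omega)
    have hNk : ‖N ^ k‖ ≤ 1 := (norm_pow_le N k).trans (pow_le_one₀ (norm_nonneg N) hN₁)
    rw [smul_pow, norm_smul, norm_smul]
    calc _ ≤ 1 * (s ^ (n - 1) * 1) := by gcongr
      _ = s ^ (n - 1) := by ring
  rw [hsum]
  calc _ ≤ ∑ k ∈ Finset.range n, s ^ (n - 1) := (norm_sum_le _ _).trans (Finset.sum_le_sum hterm)
    _ = n * s ^ (n - 1) := by simp

theorem norm_exp_smul_diagonal_le {ι : Type*} [Fintype ι] [DecidableEq ι] {d : ι → ℂ} {lam s : ℝ}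
    (hd : ∀ i, (d i).re ≤ lam) (hs : 0 ≤ s) :
    ‖NormedSpace.exp (s • diagonal d)‖ ≤ Real.exp (lam * s) := by
  rw [← diagonal_smul, exp_diagonal, l2_opNorm_diagonal]
  refine (pi_norm_le_iff_of_nonneg (Real.exp_nonneg _)).2 fun i ↦ ?_
  rw [Pi.exp_def, ← Complex.exp_eq_exp_ℂ, Complex.norm_exp, Real.exp_le_exp]
  simpa [mul_comm lam] using mul_le_mul_of_nonneg_left (hd i) hs

section Superdiagonal

variable {𝕜 : Type*} [RCLike 𝕜] {n : ℕ} {N : Matrix (Fin n) (Fin n) 𝕜}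
  (hN : ∀ i j : Fin n, (j : ℕ) ≠ i + 1 → N i j = 0)
include hN

theorem pow_apply_eq_zero_of_superdiagonal (k : ℕ) :
    ∀ i j : Fin n, (j : ℕ) ≠ i + k → (N ^ k) i j = 0 := by
  induction k with
  | zero => exact fun i j h ↦ one_apply_ne fun hij ↦ h (by simp [hij])
  | succ k ih =>
    intro i j h
    rw [pow_succ, mul_apply]
    refine Finset.sum_eq_zero fun l _ ↦ ?_
    by_cases hl : (l : ℕ) = i + k
    · rw [hN l j (by omega), mul_zero]
    · rw [ih i l hl, zero_mul]

theorem pow_eq_zero_of_superdiagonal : N ^ n = 0 := by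
  ext i j
  exact pow_apply_eq_zero_of_superdiagonal hN n i j (by omega)

theorem norm_le_one_of_superdiagonal (hN₁ : ∀ i j, ‖N i j‖ ≤ 1) : ‖N‖ ≤ 1 := by
  -- `‖N‖ ^ 2 = ‖Nᴴ * N‖`, and `Nᴴ * N` is diagonal because each row and each column of `N` has at
  -- most one nonzero entry.
  have hdiag : Nᴴ * N = diagonal fun j ↦ ∑ i, star (N i j) * N i j := by
    ext j k
    rw [mul_apply, diagonal_apply]
    split_ifs with hjk
    · simp [hjk]
    · refine Finset.sum_eq_zero fun i _ ↦ ?_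
      by_cases hj : (j : ℕ) = i + 1
      · rw [hN i k fun hk ↦ hjk (Fin.ext (by omega)), mul_zero]
      · rw [conjTranspose_apply, hN i j hj, star_zero, zero_mul]
  have hcol (j : Fin n) : ‖∑ i, star (N i j) * N i j‖ ≤ 1 := by
    by_cases h : ∃ i₀ : Fin n, (j : ℕ) = i₀ + 1
    · obtain ⟨i₀, hi₀⟩ := h
      rw [Finset.sum_eq_single i₀ (fun i _ hi ↦ by rw [hN i j fun h ↦ hi (Fin.ext (by omega)),
        mul_zero]) (by simp), norm_mul, norm_star]
      exact mul_le_one₀ (hN₁ i₀ j) (norm_nonneg _) (hN₁ i₀ j)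
    · push Not at h
      simp [hN _ j (h _)]
  have hsq : ‖N‖ * ‖N‖ ≤ 1 := by
    rw [← l2_opNorm_conjTranspose_mul_self, hdiag, l2_opNorm_diagonal]
    exact (pi_norm_le_iff_of_nonneg zero_le_one).2 hcol
  nlinarith [norm_nonneg N]

end Superdiagonal

namespace IsJordanForm

variable {n : ℕ} {J : Matrix (Fin n) (Fin n) ℂ} (hJ : IsJordanForm J)
include hJ

theorem isUpperTriangular : J.IsUpperTriangular := fun i j hij ↦ by
  simp only [id, Fin.lt_def] at hij
  exact hJ.1 i j (by omega) (by omega)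

theorem diag_mem_spectrum (i : Fin n) : J i i ∈ spectrum ℂ J := by
  refine mem_spectrum_of_isRoot_charpoly ?_
  rw [charpoly_of_isUpperTriangular J hJ.isUpperTriangular, Polynomial.IsRoot, Polynomial.eval_prod]
  exact Finset.prod_eq_zero (Finset.mem_univ i) (by simp)

theorem commute_diagonal_diag : Commute (diagonal J.diag) J := by
  ext i j
  rw [diagonal_mul, mul_diagonal, diag_apply, diag_apply]
  by_cases hij : i = j
  · rw [hij, mul_comm]
  by_cases hs : (j : ℕ) = i + 1
  · rcases hJ.2 i j hs with h | ⟨_, h⟩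
    · simp [h]
    · rw [h, mul_comm]
  · rw [hJ.1 i j (fun h ↦ hij (Fin.ext h.symm)) hs, mul_zero, zero_mul]

theorem sub_diagonal_apply_eq_zero (i j : Fin n) (h : (j : ℕ) ≠ i + 1) :
    (J - diagonal J.diag) i j = 0 := by
  by_cases hij : i = j
  · simp [hij]
  · simp [diagonal_apply_ne _ hij, hJ.1 i j (fun h' ↦ hij (Fin.ext h'.symm)) h]

theorem norm_sub_diagonal_apply_le (i j : Fin n) : ‖(J - diagonal J.diag) i j‖ ≤ 1 := by
  by_cases hs : (j : ℕ) = i + 1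
  · have hij : i ≠ j := fun h ↦ by subst h; omega
    rw [Matrix.sub_apply, diagonal_apply_ne _ hij, sub_zero]
    rcases hJ.2 i j hs with h | ⟨h, _⟩ <;> simp [h]
  · simp [hJ.sub_diagonal_apply_eq_zero i j hs]

theorem norm_exp_smul_le {lam : ℝ} (hlam : ∀ i, (J i i).re ≤ lam) {s : ℝ} (hs : 1 ≤ s) :
    ‖NormedSpace.exp (s • J)‖ ≤ n * (Real.exp (lam * s) * s ^ (n - 1)) := by
  rcases Nat.eq_zero_or_pos n with rfl | hn
  · simp [Subsingleton.elim (NormedSpace.exp (s • J)) 0]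
  have : NeZero n := ⟨hn.ne'⟩
  set N := J - diagonal J.diag
  have hcomm : Commute (s • diagonal J.diag) (s • N) :=
    ((hJ.commute_diagonal_diag.sub_right (Commute.refl _)).smul_left s).smul_right s
  rw [show s • J = s • diagonal J.diag + s • N by rw [← smul_add, add_sub_cancel],
    exp_add_of_commute _ _ hcomm]
  have hD : ‖NormedSpace.exp (s • diagonal J.diag)‖ ≤ Real.exp (lam * s) :=
    norm_exp_smul_diagonal_le hlam (by linarith)
  have hN := norm_exp_smul_le_of_pow_eq_zero
    (pow_eq_zero_of_superdiagonal hJ.sub_diagonal_apply_eq_zero)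
    (norm_le_one_of_superdiagonal hJ.sub_diagonal_apply_eq_zero hJ.norm_sub_diagonal_apply_le) hs
  calc _ ≤ _ := norm_mul_le _ _
    _ ≤ Real.exp (lam * s) * (n * s ^ (n - 1)) := by gcongr
    _ = _ := by ring

end IsJordanForm

theorem norm_exp_smul_conj_le {n : ℕ} {W J : Matrix (Fin n) (Fin n) ℂ} (hW : IsUnit W) (s : ℝ) :
    ‖NormedSpace.exp (s • (W⁻¹ * J * W))‖ ≤ ‖W‖ * ‖W⁻¹‖ * ‖NormedSpace.exp (s • J)‖ := by
  rw [← smul_mul_assoc, ← mul_smul_comm, exp_conj' W _ hW]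
  exact norm_mul₃_le.trans_eq (by ring)

section Floquet

variable {n : ℕ} {τ : ℝ} {X : ℝ → ℝ → Matrix (Fin n) (Fin n) ℂ}
  {Y W J : ℝ → Matrix (Fin n) (Fin n) ℂ} {lam c m : ℝ} (hτ : 0 < τ)
  (hXper₁ : ∀ t t₀, X (t + τ) t₀ = X t t₀) (hXper₂ : ∀ t t₀, X t (t₀ + τ) = X t t₀)
  (hYper : ∀ t₀, Y (t₀ + τ) = Y t₀) (hW : ∀ u, IsUnit (W u)) (hJ : ∀ u, IsJordanForm (J u))
  (hconj : ∀ u, Y u = (W u)⁻¹ * J u * W u) (hlam : ∀ u, ∀ μ ∈ spectrum ℂ (Y u), μ.re ≤ lam)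
  (hc : ∀ u ∈ Icc 0 τ, ‖W u‖ * ‖(W u)⁻¹‖ ≤ c)
  (hm : ∀ t ∈ Icc 0 τ, ∀ t' ∈ Icc 0 τ, ‖X t t'‖ ≤ m)
include hτ hXper₁ hXper₂ hYper hW hJ hconj hlam hc hm

theorem norm_floquet_le {a b : ℝ} (hab : 1 ≤ b - a) :
    ‖X b a * NormedSpace.exp ((b - a) • Y a)‖ ≤
      m * c * n * (Real.exp (lam * (b - a)) * (b - a) ^ (n - 1)) := by
  obtain ⟨u, hu, hYu⟩ := Function.Periodic.exists_mem_Ico₀ hYper hτ a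
  obtain ⟨a', ha', hXa⟩ := Function.Periodic.exists_mem_Ico₀ (hXper₂ b) hτ a
  obtain ⟨b', hb', hXb⟩ :=
    Function.Periodic.exists_mem_Ico₀ (f := fun t ↦ X t a') (fun t ↦ hXper₁ t a') hτ b
  have hX : ‖X b a‖ ≤ m := by
    simpa only [hXa, hXb] using hm b' (Ico_subset_Icc_self hb') a' (Ico_subset_Icc_self ha')
  have hW' : ‖W u‖ * ‖(W u)⁻¹‖ ≤ c := hc u (Ico_subset_Icc_self hu)
  have hspec (i : Fin n) : (J u i i).re ≤ lam := by
    refine hlam u _ ?_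
    rw [hconj u, ← (hW u).unit_spec, ← coe_units_inv, spectrum.units_conjugate']
    exact (hJ u).diag_mem_spectrum i
  calc _ ≤ ‖X b a‖ * ‖NormedSpace.exp ((b - a) • Y a)‖ := norm_mul_le _ _
    _ ≤ m * (c * (n * (Real.exp (lam * (b - a)) * (b - a) ^ (n - 1)))) := by
      rw [hYu, hconj u]
      refine mul_le_mul hX ((norm_exp_smul_conj_le (hW u) _).trans ?_) (norm_nonneg _)
        ((norm_nonneg _).trans hX)
      exact mul_le_mul hW' ((hJ u).norm_exp_smul_le hspec hab) (norm_nonneg _)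
        ((by positivity : (0 : ℝ) ≤ ‖W u‖ * ‖(W u)⁻¹‖).trans hW')
    _ = _ := by ring

theorem norm_floquet_le_of_le {s₀ s₁ : ℝ} (hs₀ : 1 ≤ s₀) (hlam₀ : lam ≤ 0) {a b : ℝ}
    (h₀ : s₀ ≤ b - a) (h₁ : b - a ≤ s₁) :
    ‖X b a * NormedSpace.exp ((b - a) • Y a)‖ ≤
      Real.exp (lam * s₀) * m * c * n * s₁ ^ (n - 1) := by
  have h0 : (0 : ℝ) ∈ Icc 0 τ := left_mem_Icc.2 hτ.le
  have hm₀ : 0 ≤ m := (norm_nonneg _).trans (hm 0 h0 0 h0)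
  have hc₀ : 0 ≤ c := (by positivity : (0 : ℝ) ≤ ‖W 0‖ * ‖(W 0)⁻¹‖).trans (hc 0 h0)
  have hdecay : Real.exp (lam * (b - a)) * (b - a) ^ (n - 1) ≤
      Real.exp (lam * s₀) * s₁ ^ (n - 1) :=
    mul_le_mul (Real.exp_le_exp.2 (mul_le_mul_of_nonpos_left h₀ hlam₀))
      (pow_le_pow_left₀ (by linarith) h₁ _) (pow_nonneg (by linarith) _) (Real.exp_nonneg _)
  calc _ ≤ m * c * n * (Real.exp (lam * (b - a)) * (b - a) ^ (n - 1)) :=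
        norm_floquet_le hτ hXper₁ hXper₂ hYper hW hJ hconj hlam hc hm (by linarith)
    _ ≤ m * c * n * (Real.exp (lam * s₀) * s₁ ^ (n - 1)) := by gcongr
    _ = _ := by ring

end Floquet

theorem asymptotic_periodicity_general (n : ℕ) (τ : ℝ) (hτ : 0 < τ)
    (B : ℝ → Matrix (Fin n) (Fin n) ℂ) (hBc : Continuous B) (hBper : ∀ t, B (t + τ) = B t)
    (g : ℝ → Fin n → ℂ) (hgc : Continuous g) (hgper : ∀ t, g (t + τ) = g t)
    (P : ℝ → ℝ → Matrix (Fin n) (Fin n) ℂ)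
    (hPinit : ∀ t₀, P t₀ t₀ = 1)
    (hPode : ∀ t t₀ i j, HasDerivAt (fun s => P s t₀ i j) ((B t * P t t₀) i j) t)
    (X : ℝ → ℝ → Matrix (Fin n) (Fin n) ℂ) (Y : ℝ → Matrix (Fin n) (Fin n) ℂ)
    (hFloquet : ∀ t t₀, P t t₀ = X t t₀ * NormedSpace.exp ((t - t₀) • Y t₀))
    (hXper₁ : ∀ t t₀, X (t + τ) t₀ = X t t₀) (hXper₂ : ∀ t t₀, X t (t₀ + τ) = X t t₀)
    (hYper : ∀ t₀, Y (t₀ + τ) = Y t₀)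
    (W J : ℝ → Matrix (Fin n) (Fin n) ℂ)
    (hW : ∀ u, IsUnit (W u)) (hJ : ∀ u, IsJordanForm (J u))
    (hconj : ∀ u, Y u = (W u)⁻¹ * J u * W u)
    (lam : ℝ) (hlamneg : lam < 0)
    (hlam : ∀ u, ∀ μ ∈ spectrum ℂ (Y u), μ.re ≤ lam)
    (c : ℝ) (hc : IsGreatest {r : ℝ | ∃ u ∈ Set.Icc (0 : ℝ) τ, r = ‖W u‖ * ‖(W u)⁻¹‖} c)
    (m : ℝ)
    (hm : IsGreatest
      {r : ℝ | ∃ t ∈ Set.Icc (0 : ℝ) τ, ∃ t' ∈ Set.Icc (0 : ℝ) τ, r = ‖X t t'‖} m)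
    (gmax : ℝ) (hgmax : IsGreatest {r : ℝ | ∃ v ∈ Set.Icc (0 : ℝ) τ, r = eunorm (g v)} gmax)
    (t₀ : ℝ) (x₀ : Fin n → ℂ) (x : ℝ → Fin n → ℂ) (hxinit : x t₀ = x₀)
    (hxode : ∀ t i, HasDerivAt (fun s => x s i) ((B t).mulVec (x t) i + g t i) t) :
    ∀ t : ℝ, 1 < t - t₀ →
      eunorm (x (t + τ) - x t) ≤
        Real.exp (lam * (t - t₀)) * m * c * n * (t - t₀ + τ) ^ (n - 1) *
          (2 * eunorm x₀ + τ * gmax) := by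
  intro t ht
  set e := (EuclideanSpace.equiv (Fin n) ℂ).symm
  have hK (a b : ℝ) (h₀ : t - t₀ ≤ b - a) (h₁ : b - a ≤ t - t₀ + τ) :
      ‖toRealEuclideanCLM (P b a)‖ ≤
        Real.exp (lam * (t - t₀)) * m * c * n * (t - t₀ + τ) ^ (n - 1) := by
    rw [norm_toRealEuclideanCLM, hFloquet]
    exact norm_floquet_le_of_le hτ hXper₁ hXper₂ hYper hW hJ hconj hlam
      (fun u hu ↦ hc.2 ⟨u, hu, rfl⟩) (fun r hr r' hr' ↦ hm.2 ⟨r, hr, r', hr', rfl⟩)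
      ht.le hlamneg.le h₀ h₁
  have hG (v : ℝ) : ‖e (g v)‖ ≤ gmax := by
    obtain ⟨u, hu, hgu⟩ := Function.Periodic.exists_mem_Ico₀ hgper hτ v
    exact hgu ▸ hgmax.2 ⟨u, Ico_subset_Icc_self hu, rfl⟩
  have hU (s a : ℝ) : HasDerivAt (fun r ↦ toRealEuclideanCLM (P r a))
      (toRealEuclideanCLM (B s) * toRealEuclideanCLM (P s a)) s :=
    toRealEuclideanCLM_mul (B s) (P s a) ▸ hasDerivAt_toRealEuclideanCLM (hPode s a)
  have hx (s : ℝ) :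
      HasDerivAt (fun r ↦ e (x r)) (toRealEuclideanCLM (B s) (e (x s)) + e (g s)) s := by
    rw [toRealEuclideanCLM_apply, ← map_add]
    exact hasDerivAt_euclideanEquiv_symm (hxode s)
  have hbound := norm_add_period_sub_le (toRealEuclideanCLM.continuous.comp hBc)
    (fun a ↦ by simp [hPinit, toRealEuclideanCLM_one]) hU (e.continuous.comp hgc) hx hτ.le
    (fun s ↦ by simp [hBper]) (fun s ↦ by simp [hgper]) hK hG
  rw [← hxinit]
  calc eunorm (x (t + τ) - x t) = ‖e (x (t + τ)) - e (x t)‖ := congrArg norm (map_sub e _ _)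
    _ ≤ _ := hbound
    _ = _ := by unfold eunorm; ring

/-- **Asymptotic periodicity.** For a stable `τ`-periodic system
`ẋ = B(t)x + g(t)` with Floquet decomposition `P(t,t₀) = X(t,t₀) e^{(t−t₀)Y(t₀)}`,
all Floquet exponents having real part at most `λ < 0`, the solution with
`x(t₀) = x₀` satisfies, for `t − t₀ > 1`,
`‖x(t+τ) − x(t)‖ ≤ e^{λ(t−t₀)} m c n (t−t₀+τ)^{n−1} (2‖x₀‖ + τ max_{v∈[0,τ]}‖g(v)‖)`,
where `m = max_{(t,t')∈[0,τ]²} ‖X(t,t')‖` and `c = max_{u∈[0,τ]} ‖W(u)‖‖W(u)⁻¹‖` is the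
conditioning constant of the Jordan transformations `W(u)` of `Y(u)`. -/
theorem asymptotic_periodicity (n : ℕ) (τ : ℝ) (hτ : 0 < τ)
    (B : ℝ → Matrix (Fin n) (Fin n) ℂ) (hBc : Continuous B) (hBper : ∀ t, B (t + τ) = B t)
    (g : ℝ → Fin n → ℂ) (hgc : Continuous g) (hgper : ∀ t, g (t + τ) = g t)
    (P : ℝ → ℝ → Matrix (Fin n) (Fin n) ℂ)
    (hPinit : ∀ t₀, P t₀ t₀ = 1)
    (hPode : ∀ t t₀ i j, HasDerivAt (fun s => P s t₀ i j) ((B t * P t t₀) i j) t)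
    (X : ℝ → ℝ → Matrix (Fin n) (Fin n) ℂ) (Y : ℝ → Matrix (Fin n) (Fin n) ℂ)
    (hFloquet : ∀ t t₀, P t t₀ = X t t₀ * NormedSpace.exp ((t - t₀) • Y t₀))
    (hXper₁ : ∀ t t₀, X (t + τ) t₀ = X t t₀) (hXper₂ : ∀ t t₀, X t (t₀ + τ) = X t t₀)
    (hYper : ∀ t₀, Y (t₀ + τ) = Y t₀) (hXinit : ∀ t₀, X t₀ t₀ = 1)
    (W J : ℝ → Matrix (Fin n) (Fin n) ℂ)
    (hW : ∀ u, IsUnit (W u)) (hJ : ∀ u, IsJordanForm (J u))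
    (hconj : ∀ u, Y u = (W u)⁻¹ * J u * W u)
    (lam : ℝ) (hlamneg : lam < 0)
    (hlam : ∀ u, ∀ μ ∈ spectrum ℂ (Y u), μ.re ≤ lam)
    (c : ℝ) (hc : IsGreatest {r : ℝ | ∃ u ∈ Set.Icc (0 : ℝ) τ, r = ‖W u‖ * ‖(W u)⁻¹‖} c)
    (m : ℝ)
    (hm : IsGreatest
      {r : ℝ | ∃ t ∈ Set.Icc (0 : ℝ) τ, ∃ t' ∈ Set.Icc (0 : ℝ) τ, r = ‖X t t'‖} m)
    (gmax : ℝ) (hgmax : IsGreatest {r : ℝ | ∃ v ∈ Set.Icc (0 : ℝ) τ, r = eunorm (g v)} gmax)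
    (t₀ : ℝ) (x₀ : Fin n → ℂ) (x : ℝ → Fin n → ℂ) (hxinit : x t₀ = x₀)
    (hxode : ∀ t i, HasDerivAt (fun s => x s i) ((B t).mulVec (x t) i + g t i) t) :
    ∀ t : ℝ, 1 < t - t₀ →
      eunorm (x (t + τ) - x t) ≤
        Real.exp (lam * (t - t₀)) * m * c * n * (t - t₀ + τ) ^ (n - 1) *
          (2 * eunorm x₀ + τ * gmax) :=
  asymptotic_periodicity_general n τ hτ B hBc hBper g hgc hgper P hPinit hPode X Y hFloquet hXper₁
    hXper₂ hYper W J hW hJ hconj lam hlamneg hlam c hc m hm gmax hgmax t₀ x₀ x hxinit hxode
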